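/- Let 0 ≤ l ≤ n and let 1 ≤ i_1 < ⋯ < i_l ≤ n and 1 ≤ j_1 < ⋯ < j_{n−l} ≤ n be two sequences such that {1, …, n} = {i_1, …, i_l} ∪ {j_1, …, j_{n−l}}. Then (r_{i_1} ⋯ r_{i_l})^{−1}(i_k) = k − l − 1 for all 1 ≤ k ≤ l, and (r_{i_1} ⋯ r_{i_l})^{−1}(j_k) = l + k for all 1 ≤ k ≤ n−l. -/

import Mathlib

/-!
Common setup: the Weyl group `W n` of type `B_n`, realized as the group of
permutations `w` of `I_n = {±1, …, ±n}` (inside `Equiv.Perm ℤ`, fixing every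
integer of absolute value `> n`) such that `w (-i) = - w i` for all `i`.
-/

namespace TypeB

/-- The generator `t = (1, -1)`. -/
def t : Equiv.Perm ℤ := Equiv.swap 1 (-1)

/-- The generator `s i = (i, i+1)(-i, -(i+1))` (meaningful for `1 ≤ i`). -/
def s (i : ℕ) : Equiv.Perm ℤ :=
  Equiv.swap (i : ℤ) ((i : ℤ) + 1) * Equiv.swap (-(i : ℤ)) (-((i : ℤ) + 1))

/-- The generating set `S_n = {t, s_1, …, s_{n-1}}`. -/
def gens (n : ℕ) : Set (Equiv.Perm ℤ) :=
  {t} ∪ {x | ∃ i : ℕ, 1 ≤ i ∧ i < n ∧ x = s i}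

/-- The Weyl group `W_n` of type `B_n`, as a subgroup of `Equiv.Perm ℤ`:
permutations `w` with `w (-i) = - (w i)` for all `i` and fixing all `i` with `|i| > n`. -/
def W (n : ℕ) : Subgroup (Equiv.Perm ℤ) where
  carrier := {w | (∀ i : ℤ, w (-i) = - w i) ∧ ∀ i : ℤ, (n : ℤ) < |i| → w i = i}
  one_mem' := ⟨fun _ => rfl, fun _ _ => rfl⟩
  mul_mem' := by
    rintro u v ⟨hu1, hu2⟩ ⟨hv1, hv2⟩
    refine ⟨fun i => ?_, fun i hi => ?_⟩
    · simp only [Equiv.Perm.mul_apply, hv1, hu1]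
    · simp only [Equiv.Perm.mul_apply, hv2 i hi, hu2 i hi]
  inv_mem' := by
    rintro u ⟨hu1, hu2⟩
    refine ⟨fun i => ?_, fun i hi => ?_⟩
    · apply u.injective
      rw [(show ∀ x, u (u⁻¹ x) = x from fun x => u.apply_symm_apply x), hu1, (show ∀ x, u (u⁻¹ x) = x from fun x => u.apply_symm_apply x)]
    · apply u.injective
      rw [(show ∀ x, u (u⁻¹ x) = x from fun x => u.apply_symm_apply x), hu2 i hi]

/-- The length of `w` with respect to the generating set `S_n`. -/
noncomputable def len (n : ℕ) (w : Equiv.Perm ℤ) : ℕ :=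
  sInf {k | ∃ l : List (Equiv.Perm ℤ), (∀ x ∈ l, x ∈ gens n) ∧ l.prod = w ∧ l.length = k}

/-- `l` is a reduced expression for `w` with respect to `S_n`. -/
def IsReduced (n : ℕ) (w : Equiv.Perm ℤ) (l : List (Equiv.Perm ℤ)) : Prop :=
  (∀ x ∈ l, x ∈ gens n) ∧ l.prod = w ∧ l.length = len n w

/-- `ℓ_t w`: the number of occurrences of `t` in a reduced expression of `w`
(independent of the chosen reduced expression). -/
noncomputable def lent (n : ℕ) (w : Equiv.Perm ℤ) : ℕ :=
  letI : DecidableEq (Equiv.Perm ℤ) := Classical.decEq _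
  sInf {m | ∃ l, IsReduced n w l ∧ l.count t = m}

/-- `r 1 = t` and `r (i+1) = s i * r i`. -/
def r : ℕ → Equiv.Perm ℤ
  | 0 => 1
  | 1 => t
  | (i + 2) => s (i + 1) * r (i + 1)

/-- `t_1 = t` and `t_{i+1} = s_i * t_i * s_i`. -/
def tperm : ℕ → Equiv.Perm ℤ
  | 0 => 1
  | 1 => t
  | (i + 2) => s (i + 1) * tperm (i + 1) * s (i + 1)

/-- `a l = r 1 * r 2 * ⋯ * r l`, with `a 0 = 1`. -/
def a : ℕ → Equiv.Perm ℤ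
  | 0 => 1
  | (l + 1) => a l * r (l + 1)

/-- The symmetric group `𝔖_n`: the subgroup generated by `s_1, …, s_{n-1}`. -/
def Sym (n : ℕ) : Subgroup (Equiv.Perm ℤ) :=
  Subgroup.closure {x | ∃ i : ℕ, 1 ≤ i ∧ i < n ∧ x = s i}

/-- The parabolic subgroup `𝔖_{l,n-l}`: generated by `{s_1, …, s_{n-1}} \ {s_l}`. -/
def SymP (n l : ℕ) : Subgroup (Equiv.Perm ℤ) :=
  Subgroup.closure {x | ∃ i : ℕ, 1 ≤ i ∧ i < n ∧ i ≠ l ∧ x = s i}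

/-- `Y_{l,n-l}`: elements of `𝔖_n` of minimal length in their coset `w 𝔖_{l,n-l}`. -/
def Y (n l : ℕ) : Set (Equiv.Perm ℤ) :=
  {w | w ∈ Sym n ∧ ∀ u ∈ SymP n l, len n w ≤ len n (w * u)}

/-- The subgroup `𝔖_{[i,j]}` generated by `s_i, …, s_{j-1}`. -/
def SymI (i j : ℕ) : Subgroup (Equiv.Perm ℤ) :=
  Subgroup.closure {x | ∃ k : ℕ, i ≤ k ∧ k < j ∧ x = s k}

/-- The function reversing the interval `[i,j]` (and `[-j,-i]`), for `1 ≤ i`. -/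
def revFun (i j : ℤ) : ℤ → ℤ := fun k =>
  if 1 ≤ i ∧ i ≤ k ∧ k ≤ j then i + j - k
  else if 1 ≤ i ∧ -j ≤ k ∧ k ≤ -i then -(i + j) - k
  else k

lemma revFun_involutive (i j : ℤ) : Function.Involutive (revFun i j) := by
  intro k
  unfold revFun
  split_ifs <;> omega

/-- `σ_{[i,j]}`: the longest element of `𝔖_{[i,j]}`, i.e. the order-reversing
permutation of the interval `[i,j]` (extended to `I_n` by `w(-k) = -w(k)`). -/
def sigmaI (i j : ℕ) : Equiv.Perm ℤ := (revFun_involutive (i : ℤ) (j : ℤ)).toPerm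

/-- `σ_{l,n-l}`: the longest element of `𝔖_{l,n-l} = 𝔖_{[1,l]} × 𝔖_{[l+1,n]}`. -/
def sigmaLL (n l : ℕ) : Equiv.Perm ℤ := sigmaI 1 l * sigmaI (l + 1) n

/-- The function negating all `k` with `|k| ≤ n`. -/
def negnFun (n : ℤ) : ℤ → ℤ := fun k => if -n ≤ k ∧ k ≤ n then -k else k

lemma negnFun_involutive (n : ℤ) : Function.Involutive (negnFun n) := by
  intro k
  unfold negnFun
  split_ifs <;> omega

/-- `w_n`: the longest element of `W_n`; as a permutation, `w_n i = -i` for `|i| ≤ n`. -/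
def wlong (n : ℕ) : Equiv.Perm ℤ := (negnFun_involutive (n : ℤ)).toPerm

/-- `c_I = s_{i_1} s_{i_2} ⋯ s_{i_k}` for `I = {i_1 < i_2 < ⋯ < i_k}`. -/
def cElt (I : Finset ℕ) : Equiv.Perm ℤ := ((I.sort (· ≤ ·)).map s).prod

/-- `d_I = s_{i_k} ⋯ s_{i_2} s_{i_1}` for `I = {i_1 < i_2 < ⋯ < i_k}`. -/
def dElt (I : Finset ℕ) : Equiv.Perm ℤ := (((I.sort (· ≤ ·)).map s).reverse).prod

/-- `X_n^{(m)}`: elements of `W_n` of minimal length in their coset `w W_m`. -/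
def X (n m : ℕ) : Set (Equiv.Perm ℤ) :=
  {w | w ∈ W n ∧ ∀ u ∈ W m, len n w ≤ len n (w * u)}

/-- Bruhat order: `x ≤ y` iff some reduced expression of `y` contains a subword
which is a reduced expression of `x`. -/
def BruhatLE (n : ℕ) (x y : Equiv.Perm ℤ) : Prop :=
  ∃ ly, IsReduced n y ly ∧ ∃ lx, lx.Sublist ly ∧ IsReduced n x lx

/-- Strict Bruhat order. -/
def BruhatLT (n : ℕ) (x y : Equiv.Perm ℤ) : Prop := BruhatLE n x y ∧ x ≠ y

/-- `D_i(W_n)`: the set of `x` such that exactly one of `s_i, s_{i+1}` is a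
(right) descent of `x`. -/
def Dset (n i : ℕ) : Set (Equiv.Perm ℤ) :=
  {x | Xor' (len n (x * s i) < len n x) (len n (x * s (i + 1)) < len n x)}

open Classical in
/-- `γ_i x`: the unique element of `{x s_i, x s_{i+1}} ∩ D_i(W_n)` (for `x ∈ D_i(W_n)`). -/
noncomputable def gamma (n i : ℕ) (x : Equiv.Perm ℤ) : Equiv.Perm ℤ :=
  if x * s i ∈ Dset n i then x * s i else x * s (i + 1)

/-- `E_m^{(r)}`: the set of `w ∈ W_m` such that `|w 1| > |w i|` for `2 ≤ i ≤ r+2`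
and `(w 2, …, w (r+2))` is a shuffle of a positive decreasing sequence and a
negative increasing sequence. -/
def E (m ρ : ℕ) : Set (Equiv.Perm ℤ) :=
  {w | w ∈ W m ∧ (∀ i : ℕ, 2 ≤ i → i ≤ ρ + 2 → |w (i : ℤ)| < |w (1 : ℤ)|) ∧
    ∀ i j : ℕ, 2 ≤ i → i < j → j ≤ ρ + 2 →
      (0 < w (i : ℤ) → 0 < w (j : ℤ) → w (j : ℤ) < w (i : ℤ)) ∧
      (w (i : ℤ) < 0 → w (j : ℤ) < 0 → w (i : ℤ) < w (j : ℤ))}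

/-- The product `r_{i_1} ⋯ r_{i_l}` for a sequence `i : Fin l → ℕ`. -/
def prodR {l : ℕ} (i : Fin l → ℕ) : Equiv.Perm ℤ := (List.ofFn fun k => r (i k)).prod

/-- `(l, α, β, σ)` is a decomposition of `w` as in the decomposition lemma:
`l ≤ n`, `α, β ∈ Y_{l,n-l}`, `σ ∈ 𝔖_{l,n-l}` and `w = α a_l σ β⁻¹`. -/
def IsDecomp (n : ℕ) (w : Equiv.Perm ℤ) (l : ℕ) (α β σ : Equiv.Perm ℤ) : Prop :=
  l ≤ n ∧ α ∈ Y n l ∧ β ∈ Y n l ∧ σ ∈ SymP n l ∧ w = α * a l * σ * β⁻¹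


/-!
Write `(r_{i_1} ⋯ r_{i_l})⁻¹ = r_{i_l}⁻¹ ⋯ r_{i_1}⁻¹` and follow a point through the factors,
peeling off the largest index `i_l` by induction on `l`. The point `i_k` is fixed by the earlier
factors, sent to `-1` by `r_{i_k}⁻¹` and lowered by one by each of the `l - k` later ones. A
positive `m` outside `{i_1, …, i_l}` is raised by one by each factor `r_{i_k}⁻¹` with `i_k > m`.
Since `{i_*}` and `{j_*}` partition `[1, n]`, exactly `j_k - k` of the `i`'s lie below `j_k`,
so `j_k` ends at `j_k + (l - (j_k - k)) = l + k`.
-/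

open Finset

-- `(r a)⁻¹` is the signed cycle `1 ↦ 2 ↦ ⋯ ↦ a ↦ -1 ↦ -2 ↦ ⋯ ↦ -a ↦ 1`.
def rInvFun (a : ℕ) (x : ℤ) : ℤ :=
  if 1 ≤ x ∧ x < a then x + 1
  else if x = a then -1
  else if -a < x ∧ x ≤ -1 then x - 1
  else if x = -a then 1
  else x

lemma r_inv_apply : ∀ a : ℕ, 1 ≤ a → ∀ x : ℤ, (r a)⁻¹ x = rInvFun a x
  | 1, _, x => by
    simp only [r, t, Equiv.swap_inv, Equiv.swap_apply_def, rInvFun]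
    split_ifs <;> omega
  | a + 2, _, x => by
    rw [r, mul_inv_rev, Equiv.Perm.mul_apply, r_inv_apply (a + 1) (by omega)]
    simp only [s, mul_inv_rev, Equiv.swap_inv, Equiv.Perm.mul_apply, Equiv.swap_apply_def,
      rInvFun]
    push_cast
    split_ifs <;> omega

lemma prodR_succ {l : ℕ} (i : Fin (l + 1) → ℕ) :
    prodR i = prodR (Fin.init i) * r (i (Fin.last l)) := by
  rw [prodR, prodR, List.ofFn_succ', List.prod_concat]
  rfl

lemma card_le_of_injective_of_mem_Ioo {α : Type*} {f : α → ℕ} (hf : f.Injective)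
    (s : Finset α) {m a : ℕ} (h : ∀ x ∈ s, m < f x ∧ f x < a) : #s ≤ a - m - 1 := by
  calc #s ≤ #(Ioo m a) :=
        card_le_card_of_injOn f (fun x hx => mem_Ioo.mpr (h x hx)) hf.injOn
    _ = a - m - 1 := by rw [Nat.card_Ioo]

lemma card_filter_univ_castSucc {l : ℕ} (p : Fin (l + 1) → Prop) [DecidablePred p] :
    #{k | p k} = #{k : Fin l | p k.castSucc} + if p (Fin.last l) then 1 else 0 := by
  simp only [card_filter, Fin.sum_univ_castSucc]

lemma prodR_inv_apply_of_forall_ne : ∀ {l : ℕ} (i : Fin l → ℕ), StrictMono i →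
    (∀ k, 1 ≤ i k) → ∀ m : ℕ, 1 ≤ m → (∀ k, i k ≠ m) →
    (prodR i)⁻¹ (m : ℤ) = m + #{k | m < i k}
  | 0, i, _, _, m, _, _ => by simp [prodR]
  | l + 1, i, hi, hpos, m, hm, hne => by
    have hinit : StrictMono (Fin.init i) := hi.comp Fin.strictMono_castSucc
    have hc : #{k | m < Fin.init i k} ≤ i (Fin.last l) - m - 1 :=
      card_le_of_injective_of_mem_Ioo hinit.injective _ fun k hk =>
        ⟨(mem_filter.mp hk).2, hi (Fin.castSucc_lt_last k)⟩
    have hcount : #{k | m < i k} =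
        #{k | m < Fin.init i k} + if m < i (Fin.last l) then 1 else 0 :=
      card_filter_univ_castSucc _
    have hlast := hne (Fin.last l)
    rw [prodR_succ, mul_inv_rev, Equiv.Perm.mul_apply,
      prodR_inv_apply_of_forall_ne _ hinit (fun k => hpos _) m hm (fun k => hne _),
      r_inv_apply _ (hpos _), hcount, rInvFun]
    split_ifs <;> omega

lemma prodR_inv_apply_self : ∀ {l : ℕ} (i : Fin l → ℕ), StrictMono i → (∀ k, 1 ≤ i k) →
    ∀ k, (prodR i)⁻¹ (i k : ℤ) = k - l
  | 0, _, _, _, k => k.elim0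
  | l + 1, i, hi, hpos, k => by
    have hinit : StrictMono (Fin.init i) := hi.comp Fin.strictMono_castSucc
    have hbelow : ∀ k, Fin.init i k < i (Fin.last l) := fun k => hi (Fin.castSucc_lt_last k)
    have hlen : l ≤ i (Fin.last l) - 0 - 1 := by
      simpa using
        card_le_of_injective_of_mem_Ioo hinit.injective univ fun k _ => ⟨hpos _, hbelow k⟩
    rw [prodR_succ, mul_inv_rev, Equiv.Perm.mul_apply, r_inv_apply _ (hpos _)]
    induction k using Fin.lastCases with
    | last =>
      have hnone :
          #{k | i (Fin.last l) < Fin.init i k} ≤ i (Fin.last l) - i (Fin.last l) - 1 :=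
        card_le_of_injective_of_mem_Ioo hinit.injective _ fun k hk =>
          ⟨(mem_filter.mp hk).2, hbelow k⟩
      rw [prodR_inv_apply_of_forall_ne _ hinit (fun k => hpos _) _ (hpos _)
        (fun k => (hbelow k).ne), rInvFun, Fin.val_last]
      split_ifs <;> omega
    | cast k =>
      rw [show i k.castSucc = Fin.init i k from rfl,
        prodR_inv_apply_self _ hinit (fun k => hpos _), rInvFun, Fin.val_castSucc]
      split_ifs <;> omega

lemma card_filter_univ_sum {α β : Type*} [Fintype α] [Fintype β] (p : α ⊕ β → Prop)
    [DecidablePred p] : #{x | p x} = #{a | p (.inl a)} + #{b | p (.inr b)} := by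
  simp only [card_filter, Fintype.sum_sum_type]

lemma card_lt_add_card_gt {α : Type*} [Fintype α] (f : α → ℕ) {m : ℕ} (hne : ∀ x, f x ≠ m) :
    #{x | f x < m} + #{x | m < f x} = Fintype.card α := by
  calc _ = #{x | f x < m} + #{x | ¬ f x < m} := by
        congr 2
        exact filter_congr fun x _ => by have := hne x; omega
    _ = Fintype.card α := by rw [card_filter_add_card_filter_not, card_univ]

lemma card_filter_lt_of_injective {α : Type*} [Fintype α] {f : α → ℕ} (hf : f.Injective)
    (hpos : ∀ x, 1 ≤ f x) {m : ℕ} (hsurj : ∀ y, 1 ≤ y → y < m → ∃ x, f x = y) :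
    #{x | f x < m} = m - 1 := by
  rw [← card_image_of_injective _ hf, ← Nat.card_Ico 1 m]
  congr 1
  ext y
  simp only [mem_image, mem_filter, mem_univ, true_and, mem_Ico]
  constructor
  · rintro ⟨x, hx, rfl⟩
    exact ⟨hpos x, hx⟩
  · rintro ⟨hy1, hym⟩
    obtain ⟨x, rfl⟩ := hsurj y hy1 hym
    exact ⟨x, hym, rfl⟩

section Partition

variable {n l : ℕ} {i : Fin l → ℕ} {j : Fin (n - l) → ℕ}
  (hi1 : ∀ k, 1 ≤ i k ∧ i k ≤ n) (hj1 : ∀ k, 1 ≤ j k ∧ j k ≤ n)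
  (hcover : ∀ m : ℕ, 1 ≤ m → m ≤ n → (∃ k, i k = m) ∨ (∃ k, j k = m))
include hi1 hj1 hcover

lemma sumElim_injective_of_surjOn_Icc (hl : l ≤ n) : (Sum.elim i j).Injective := by
  have hmaps :
      Set.MapsTo (Sum.elim i j) ↑(univ : Finset (Fin l ⊕ Fin (n - l))) ↑(Icc 1 n) := by
    rintro (k | k) - <;> simp [hi1, hj1]
  have hsurj :
      Set.SurjOn (Sum.elim i j) ↑(univ : Finset (Fin l ⊕ Fin (n - l))) ↑(Icc 1 n) := by
    intro m hm
    rw [coe_Icc, Set.mem_Icc] at hm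
    rcases hcover m hm.1 hm.2 with ⟨k, hk⟩ | ⟨k, hk⟩
    exacts [⟨.inl k, by simp, hk⟩, ⟨.inr k, by simp, hk⟩]
  simpa using injOn_of_surjOn_of_card_le _ hmaps hsurj (by simp; omega)

lemma card_lt_add_card_lt (hl : l ≤ n) {m : ℕ} (hm : m ≤ n + 1) :
    #{q | i q < m} + #{q | j q < m} = m - 1 := by
  refine (card_filter_univ_sum fun x => Sum.elim i j x < m).symm.trans
    (card_filter_lt_of_injective (sumElim_injective_of_surjOn_Icc hi1 hj1 hcover hl) ?_ ?_)
  · rintro (q | q) <;> simp [hi1, hj1]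
  · intro y hy1 hym
    rcases hcover y hy1 (by omega) with ⟨q, hq⟩ | ⟨q, hq⟩
    exacts [⟨.inl q, hq⟩, ⟨.inr q, hq⟩]

end Partition

/-- if `{1,…,n}` is the union of the values of the increasing
sequences `i_1 < ⋯ < i_l` and `j_1 < ⋯ < j_{n-l}`, then
`(r_{i_1} ⋯ r_{i_l})⁻¹ (i_k) = k - l - 1` and `(r_{i_1} ⋯ r_{i_l})⁻¹ (j_k) = l + k`. -/
theorem stmt3 (n l : ℕ) (hl : l ≤ n)
    (i : Fin l → ℕ) (j : Fin (n - l) → ℕ)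
    (hi : StrictMono i) (hj : StrictMono j)
    (hi1 : ∀ k, 1 ≤ i k ∧ i k ≤ n) (hj1 : ∀ k, 1 ≤ j k ∧ j k ≤ n)
    (hcover : ∀ m : ℕ, 1 ≤ m → m ≤ n → (∃ k, i k = m) ∨ (∃ k, j k = m)) :
    (∀ k : Fin l, (prodR i)⁻¹ (i k : ℤ) = ((k : ℕ) + 1 : ℤ) - (l : ℤ) - 1) ∧
    (∀ k : Fin (n - l), (prodR i)⁻¹ (j k : ℤ) = (l : ℤ) + ((k : ℕ) + 1 : ℤ)) := by
  have hpos : ∀ k, 1 ≤ i k := fun k => (hi1 k).1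
  refine ⟨fun k => by rw [prodR_inv_apply_self i hi hpos k]; ring, fun k => ?_⟩
  have hne : ∀ q, i q ≠ j k := fun q h =>
    Sum.inl_ne_inr (sumElim_injective_of_surjOn_Icc hi1 hj1 hcover hl h)
  obtain ⟨hjk_pos, hjk_le⟩ := hj1 k
  have hbelow := card_lt_add_card_lt hi1 hj1 hcover hl (m := j k) (by omega)
  have hj_below : #{q | j q < j k} = k := by
    simp only [hj.lt_iff_lt, filter_gt_eq_Iio, Fin.card_Iio]
  have hi_split := card_lt_add_card_gt i hne
  rw [Fintype.card_fin] at hi_split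
  rw [prodR_inv_apply_of_forall_ne i hi hpos _ hjk_pos hne]
  omega

end TypeB
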